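/- Let q be a probability density on ℝᵖ and β₁ ≠ β₂ ∈ ℝᵖ, α₁, α₂ ∈ ℝ with ∫ e^{αₜ + xᵀβₜ} q(x) dx = 1 for t = 1, 2. Suppose the covariance matrix of X under q is positive definite. Then the functions x ↦ e^{α₁ + xᵀβ₁} and x ↦ e^{α₂ + xᵀβ₂} are not equal q-almost everywhere. -/
import Mathlib


open Real MeasureTheory ProbabilityTheory

/-- Under positive-definite covariance of the features, distinct slope vectors
yield genuinely distinct exponentially tilted density ratios. -/
theorem stmt_17 {p : ℕ} (μ : Measure (Fin p → ℝ)) [IsProbabilityMeasure μ]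
    (α₁ α₂ : ℝ) (β₁ β₂ : Fin p → ℝ) (hβ : β₁ ≠ β₂)
    (h₁ : ∫ x, exp (α₁ + ∑ i, x i * β₁ i) ∂μ = 1)
    (h₂ : ∫ x, exp (α₂ + ∑ i, x i * β₂ i) ∂μ = 1)
    (hcov : ∀ v : Fin p → ℝ, v ≠ 0 → 0 < variance (fun x => ∑ i, x i * v i) μ) :
    ¬ (∀ᵐ x ∂μ, exp (α₁ + ∑ i, x i * β₁ i) = exp (α₂ + ∑ i, x i * β₂ i)) := by
  intro h
  set v : Fin p → ℝ := fun i => β₁ i - β₂ i with hv_def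
  have hv : v ≠ 0 := by
    intro hc
    apply hβ
    funext i
    have := congrFun hc i
    simp [hv_def] at this
    linarith
  set X : (Fin p → ℝ) → ℝ := fun x => ∑ i, x i * v i with hX_def
  have h' : ∀ᵐ x ∂μ, X x = α₂ - α₁ := by
    filter_upwards [h] with x hx
    have := Real.exp_injective hx
    simp only [hX_def, hv_def, mul_sub, Finset.sum_sub_distrib]
    linarith
  have hm : ∫ x, X x ∂μ = α₂ - α₁ := by
    rw [integral_congr_ae h']
    simp
  have hev : evariance X μ = 0 := by
    rw [evariance]
    rw [← lintegral_zero (μ := μ)]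
    apply lintegral_congr_ae
    filter_upwards [h'] with x hx
    simp [hx, hm]
  have : variance X μ = 0 := by
    rw [variance, hev]; simp
  have := hcov v hv
  rw [← hX_def] at this
  linarith
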